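/- arXiv:math/0503172 — 5 statements merged into one kernel-verified Lean document; each statement's English description precedes it below -/
import Mathlib

section
/- The assignment μ_q(a + p^N ℤ_p) = q^a / [p^N]_q, for 0 ≤ a < p^N, defines a distribution on ℤ_p: it satisfies the compatibility (distribution) relation μ_q(a + p^N ℤ_p) = Σ_{i=0}^{p-1} μ_q(a + i p^N + p^{N+1} ℤ_p). -/
open Filter Finset Topology

variable {p : ℕ} [hp : Fact p.Prime] {K : Type*} [NontriviallyNormedField K]

/-- The `q`-analogue `[n]_q = (1 - q^n)/(1 - q)` of a natural number `n`. -/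
noncomputable def qNum (q : K) (n : ℕ) : K := (1 - q ^ n) / (1 - q)

/-- `f : ℤ_p → K` is a `C¹` (strictly differentiable) function: the difference quotient
`Δ₁f(m,x) = (f(x+m) - f(x))/m` extends to a continuous function of `(m, x)`. Here
`ι : ℤ_p →+* K` is the (isometric) embedding of `ℤ_p` into `K`. -/
def IsC1 (ι : PadicInt p →+* K) (f : PadicInt p → K) : Prop :=
  ∃ Df : PadicInt p × PadicInt p → K, Continuous Df ∧
    ∀ m x : PadicInt p, m ≠ 0 → Df (m, x) * ι m = f (x + m) - f x

/-- A `K`-valued distribution on `ℤ_p`: `μ x n` is the value on the ball `x + pⁿℤ_p`;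
it depends only on the ball and is finitely additive under splitting a ball of level `n`
into the `p` balls of level `n+1`. -/
def IsDist (μ : PadicInt p → ℕ → K) : Prop :=
  (∀ (x y : PadicInt p) (n : ℕ), ‖x - y‖ ≤ (p : ℝ) ^ (-(n : ℤ)) → μ x n = μ y n) ∧
  ∀ (x : PadicInt p) (n : ℕ),
    μ x n = ∑ i ∈ range p, μ (x + (i : PadicInt p) * (p : PadicInt p) ^ n) (n + 1)

lemma na_natCast_le_one (hna : IsNonarchimedean (‖·‖ : K → ℝ)) (n : ℕ) :
    ‖(n : K)‖ ≤ 1 := by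
  induction n with
  | zero => simp
  | succ m ih =>
      push_cast
      exact le_trans (hna _ _) (max_le ih (by simp))

lemma na_sum_lt (hna : IsNonarchimedean (‖·‖ : K → ℝ)) {ι : Type*} {s : Finset ι}
    {f : ι → K} {b : ℝ} (hb : 0 < b) (h : ∀ i ∈ s, ‖f i‖ < b) : ‖∑ i ∈ s, f i‖ < b := by
  classical
  induction s using Finset.induction with
  | empty => simpa using hb
  | insert _ _ hx ih =>
      rw [Finset.sum_insert hx]
      exact lt_of_le_of_lt (hna _ _) (max_lt (h _ (Finset.mem_insert_self _ _))
        (ih fun i hi => h i (Finset.mem_insert_of_mem hi)))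

lemma na_add_eq (hna : IsNonarchimedean (‖·‖ : K → ℝ)) {a b : K} (h : ‖b‖ < ‖a‖) :
    ‖a + b‖ = ‖a‖ := by
  have h1 : ‖a + b‖ ≤ ‖a‖ := le_trans (hna a b) (max_le le_rfl h.le)
  have h2 : ‖a‖ ≤ max ‖a + b‖ ‖b‖ := by
    have := hna (a + b) (-b)
    simpa using this
  exact le_antisymm h1 ((le_max_iff.mp h2).resolve_right (not_le.mpr h))

lemma step_pow_p (q : K) (hna : IsNonarchimedean (‖·‖ : K → ℝ))
    (hpK : ‖(p : K)‖ = (p : ℝ)⁻¹)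
    (hq : ‖1 - q‖ < (p : ℝ) ^ (-1 / ((p : ℝ) - 1))) (hq1 : q ≠ 1) :
    q ^ p ≠ 1 ∧ ‖1 - q ^ p‖ < (p : ℝ) ^ (-1 / ((p : ℝ) - 1)) := by
  have hp2 : 2 ≤ p := hp.out.two_le
  have hp1R : (1 : ℝ) < p := by exact_mod_cast hp.out.one_lt
  have hpe : -1 / ((p : ℝ) - 1) < 0 := by
    apply div_neg_of_neg_of_pos <;> nlinarith
  have hb1 : (p : ℝ) ^ (-1 / ((p : ℝ) - 1)) < 1 :=
    Real.rpow_lt_one_of_one_lt_of_neg hp1R hpe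
  set u : K := q - 1 with hu
  have hu0 : u ≠ 0 := sub_ne_zero.mpr hq1
  have hun : ‖u‖ = ‖1 - q‖ := by rw [← norm_neg]; congr 1; ring
  have hupos : 0 < ‖u‖ := norm_pos_iff.mpr hu0
  have hult : ‖u‖ < (p : ℝ) ^ (-1 / ((p : ℝ) - 1)) := hun ▸ hq
  have hult1 : ‖u‖ < 1 := hult.trans hb1
  -- the key power bound : ‖u‖ ^ (p-1) < p⁻¹
  have hkey : ‖u‖ ^ (p - 1) < (p : ℝ)⁻¹ := by
    have hcpos : (0:ℝ) < ((p - 1 : ℕ) : ℝ) := by exact_mod_cast (by omega : 0 < p - 1)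
    have := Real.rpow_lt_rpow (norm_nonneg u) hult hcpos
    rw [← Real.rpow_mul (by positivity)] at this
    have hc : ((p - 1 : ℕ) : ℝ) = (p : ℝ) - 1 := by
      push_cast [Nat.cast_sub (by omega : (1:ℕ) ≤ p)]; ring
    rw [hc] at this
    have hne : (p : ℝ) - 1 ≠ 0 := by nlinarith
    rw [div_mul_cancel₀ _ hne] at this
    rw [← Real.rpow_natCast ‖u‖ (p - 1), hc]
    simpa [Real.rpow_neg_one] using this
  -- binomial expansion
  have hexp : q ^ p - 1 = (p : K) * u + ∑ k ∈ Finset.Ico 2 (p + 1), u ^ k * (p.choose k : K) := by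
    have hq' : q = u + 1 := by ring
    rw [hq', add_pow]
    rw [Finset.range_eq_Ico, Finset.sum_eq_sum_Ico_succ_bot (by omega : 0 < p + 1),
      Finset.sum_eq_sum_Ico_succ_bot (by omega : 1 < p + 1)]
    simp only [pow_zero, one_pow, mul_one, one_mul, Nat.choose_zero_right, Nat.choose_one_right,
      pow_one, Nat.cast_one]
    ring
  have hSbound : ‖∑ k ∈ Finset.Ico 2 (p + 1), u ^ k * (p.choose k : K)‖ < (p : ℝ)⁻¹ * ‖u‖ := by
    apply na_sum_lt hna (by positivity)
    intro k hk
    simp only [Finset.mem_Ico] at hk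
    rw [norm_mul, norm_pow]
    rcases eq_or_ne k p with hkp | hkp
    · -- k = p : ‖u‖^p = ‖u‖^(p-1) * ‖u‖ < p⁻¹ ‖u‖
      rw [hkp, Nat.choose_self]
      have hsplit : ‖u‖ ^ p = ‖u‖ ^ (p - 1) * ‖u‖ := by
        rw [← pow_succ]; congr 1; omega
      simp only [Nat.cast_one, norm_one, mul_one]
      rw [hsplit]
      exact mul_lt_mul_of_pos_right hkey hupos
    · -- 2 ≤ k < p : p ∣ choose, ‖choose‖ ≤ p⁻¹, ‖u‖^k < ‖u‖
      have hklt : k < p := by omega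
      obtain ⟨m, hm⟩ := hp.out.dvd_choose_self (by omega : k ≠ 0) hklt
      have hcnorm : ‖(p.choose k : K)‖ ≤ (p : ℝ)⁻¹ := by
        rw [hm]
        push_cast
        rw [norm_mul, hpK]
        calc (p : ℝ)⁻¹ * ‖(m : K)‖ ≤ (p : ℝ)⁻¹ * 1 :=
              mul_le_mul_of_nonneg_left (na_natCast_le_one hna m) (by positivity)
          _ = (p : ℝ)⁻¹ := mul_one _
      have huk : ‖u‖ ^ k < ‖u‖ := by
        calc ‖u‖ ^ k ≤ ‖u‖ ^ 2 := pow_le_pow_of_le_one (norm_nonneg u) hult1.le hk.1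
          _ = ‖u‖ * ‖u‖ := sq ‖u‖
          _ < 1 * ‖u‖ := mul_lt_mul_of_pos_right hult1 hupos
          _ = ‖u‖ := one_mul _
      calc ‖u‖ ^ k * ‖(p.choose k : K)‖ ≤ ‖u‖ ^ k * (p : ℝ)⁻¹ :=
            mul_le_mul_of_nonneg_left hcnorm (by positivity)
        _ = (p : ℝ)⁻¹ * ‖u‖ ^ k := mul_comm _ _
        _ < (p : ℝ)⁻¹ * ‖u‖ := mul_lt_mul_of_pos_left huk (by positivity)
  have hmain : ‖q ^ p - 1‖ = (p : ℝ)⁻¹ * ‖u‖ := by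
    rw [hexp, na_add_eq hna (by rw [norm_mul, hpK]; exact hSbound), norm_mul, hpK]
  constructor
  · intro h
    rw [h] at hmain
    simp only [sub_self, norm_zero] at hmain
    have : (0:ℝ) < (p : ℝ)⁻¹ * ‖u‖ := by positivity
    linarith
  · rw [← norm_neg, show -(1 - q ^ p) = q ^ p - 1 by ring, hmain]
    calc (p : ℝ)⁻¹ * ‖u‖ ≤ 1 * ‖u‖ := by
          apply mul_le_mul_of_nonneg_right _ (norm_nonneg u)
          rw [inv_le_one_iff₀]; right; linarith
      _ = ‖u‖ := one_mul _
      _ < _ := hult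

/-- `μ_q(a + p^N ℤ_p) = q^a/[p^N]_q` satisfies the distribution relation
`μ_q(a + p^N ℤ_p) = ∑_{i=0}^{p-1} μ_q(a + i p^N + p^{N+1} ℤ_p)`. -/
theorem muq_distribution_relation
(q : K) (hna : IsNonarchimedean (‖·‖ : K → ℝ)) (hpK : ‖(p : K)‖ = (p : ℝ)⁻¹)
    (hq : ‖1 - q‖ < (p : ℝ) ^ (-1 / ((p : ℝ) - 1))) (hq1 : q ≠ 1) :
    ∀ (N a : ℕ), a < p ^ N →
      q ^ a / qNum q (p ^ N) =
        ∑ i ∈ range p, q ^ (a + i * p ^ N) / qNum q (p ^ (N + 1)) := by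
  have key : ∀ N : ℕ, q ^ (p ^ N) ≠ 1 ∧ ‖1 - q ^ (p ^ N)‖ < (p : ℝ) ^ (-1 / ((p : ℝ) - 1)) := by
    intro N
    induction N with
    | zero => simpa using ⟨hq1, hq⟩
    | succ n ih =>
        have h := step_pow_p (q ^ (p ^ n)) hna hpK ih.2 ih.1
        rwa [← pow_mul, ← pow_succ] at h
  intro N a _
  have hC : (1 : K) - q ≠ 0 := sub_ne_zero.mpr hq1.symm
  have hA : (1 : K) - q ^ (p ^ N) ≠ 0 := sub_ne_zero.mpr (key N).1.symm
  have hB : (1 : K) - q ^ (p ^ (N + 1)) ≠ 0 := sub_ne_zero.mpr (key (N + 1)).1.symm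
  have hA' : q ^ (p ^ N) - 1 ≠ 0 := sub_ne_zero.mpr (key N).1
  have hpow : (q ^ (p ^ N)) ^ p = q ^ (p ^ (N + 1)) := by rw [← pow_mul, pow_succ]
  have hsum : ∑ i ∈ range p, q ^ (a + i * p ^ N) =
      q ^ a * ((q ^ (p ^ (N + 1)) - 1) / (q ^ (p ^ N) - 1)) := by
    simp_rw [pow_add, mul_comm _ (p ^ N), pow_mul, pow_one]
    rw [← Finset.mul_sum, geom_sum_eq (key N).1, hpow]
  rw [← Finset.sum_div, hsum]
  unfold qNum
  field_simp
  ring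
end

section
/- The zeroth q-Bernoulli number β_{0,q} = ∫_{ℤ_p} q^{-x} dμ_q(x) equals (q-1)/log q, where the integral is the q-Volkenborn integral and log is the p-adic logarithm. -/
open Filter Finset Topology

variable {p : ℕ} [hp : Fact p.Prime] {K : Type*} [NontriviallyNormedField K]

set_option linter.unusedSectionVars false

section AuxLemmas

variable (hna : IsNonarchimedean (‖·‖ : K → ℝ)) (hpK : ‖(p : K)‖ = (p : ℝ)⁻¹)

include hna hpK in
lemma aux_charZero' : CharZero K := by
  haveI := IsUltrametricDist.isUltrametricDist_of_isNonarchimedean_norm hna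
  have h2 : (2:ℕ) ≤ p := hp.out.two_le
  rcases CharP.char_is_prime_or_zero K (ringChar K) with hr | hr
  · exfalso
    have hcongr : ((p : ℕ) : ZMod (ringChar K)) ^ (ringChar K) = (p : ZMod (ringChar K)) := by
      haveI : Fact (ringChar K).Prime := ⟨hr⟩
      exact ZMod.pow_card _
    have hdvd : (ringChar K : ℤ) ∣ (p:ℤ)^(ringChar K) - (p:ℤ) := by
      rw [← ZMod.intCast_zmod_eq_zero_iff_dvd]
      push_cast
      rw [hcongr]; ring
    obtain ⟨c, hc⟩ := hdvd
    have hK : (p:K)^(ringChar K) - (p:K) = 0 := by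
      have := congrArg (fun z : ℤ => (z : K)) hc
      push_cast at this
      rw [this, show ((ringChar K : ℕ):K) = 0 from CharP.cast_eq_zero K _, zero_mul]
    have hnorm : ‖(p:K)‖ ^ (ringChar K) = ‖(p:K)‖ := by
      rw [← norm_pow]
      have : (p:K)^(ringChar K) = (p:K) := by linear_combination hK
      rw [this]
    have hlt : ‖(p:K)‖ < 1 := by
      rw [hpK]
      rw [inv_lt_one_iff₀]
      right; exact_mod_cast hp.out.one_lt
    have hpos : (0:ℝ) < ‖(p:K)‖ := by
      rw [hpK]; positivity
    have h2r : 2 ≤ ringChar K := hr.two_le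
    have : ‖(p:K)‖ ^ (ringChar K) < ‖(p:K)‖ := by
      calc ‖(p:K)‖ ^ (ringChar K) ≤ ‖(p:K)‖ ^ 2 := by
            exact pow_le_pow_of_le_one (le_of_lt hpos) (le_of_lt hlt) h2r
        _ < ‖(p:K)‖ := by nlinarith
    rw [hnorm] at this; exact lt_irrefl _ this
  · haveI : CharP K 0 := by rw [← hr]; exact ringChar.charP K
    exact CharP.charP_to_charZero K

include hna hpK in
lemma aux_norm_coprime' {m : ℕ} (hm : ¬ p ∣ m) (hm0 : m ≠ 0) : ‖(m:K)‖ = 1 := by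
  haveI := IsUltrametricDist.isUltrametricDist_of_isNonarchimedean_norm hna
  refine le_antisymm (IsUltrametricDist.norm_natCast_le_one K m) ?_
  by_contra hlt
  push_neg at hlt
  have hcop : IsCoprime (p:ℤ) (m:ℤ) := by
    rw [Int.isCoprime_iff_gcd_eq_one]
    exact_mod_cast hp.out.coprime_iff_not_dvd.mpr hm
  obtain ⟨a, b, hab⟩ := hcop
  have h1 : (1:K) = (a:K) * (p:K) + (b:K) * (m:K) := by
    have := congrArg (fun z : ℤ => (z : K)) hab
    push_cast at this
    exact this.symm
  have hmax := hna ((a:K) * (p:K)) ((b:K) * (m:K))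
  rw [← h1] at hmax
  have hp1 : (1:ℝ) < p := by exact_mod_cast hp.out.one_lt
  have hA : ‖(a:K) * (p:K)‖ < 1 := by
    rw [norm_mul, hpK]
    calc ‖(a:K)‖ * ((p:ℝ))⁻¹ ≤ 1 * (p:ℝ)⁻¹ := by
          apply mul_le_mul_of_nonneg_right (IsUltrametricDist.norm_intCast_le_one K a)
          positivity
      _ < 1 := by rw [one_mul, inv_lt_one_iff₀]; right; exact hp1
  have hB : ‖(b:K) * (m:K)‖ < 1 := by
    rw [norm_mul]
    calc ‖(b:K)‖ * ‖(m:K)‖ ≤ 1 * ‖(m:K)‖ := by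
          apply mul_le_mul_of_nonneg_right (IsUltrametricDist.norm_intCast_le_one K b)
          exact norm_nonneg _
      _ < 1 := by rw [one_mul]; exact hlt
  simp only [norm_one] at hmax
  rw [max_def] at hmax
  split_ifs at hmax <;> linarith

include hna hpK in
lemma aux_norm_natCast' {n : ℕ} (hn : n ≠ 0) : ‖(n:K)‖ = (p:ℝ) ^ (-(padicValNat p n : ℤ)) := by
  have hfac : n.factorization p = padicValNat p n := Nat.factorization_def n hp.out
  have hself : p ^ n.factorization p * (n / p ^ n.factorization p) = n :=
    Nat.ordProj_mul_ordCompl_eq_self n p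
  have hndvd : ¬ p ∣ (n / p ^ n.factorization p) := Nat.not_dvd_ordCompl hp.out hn
  have hpos : 0 < n / p ^ n.factorization p := Nat.ordCompl_pos p hn
  have : ((n:K)) = ((p:K)) ^ n.factorization p * ((n / p ^ n.factorization p : ℕ) : K) := by
    rw [← Nat.cast_pow, ← Nat.cast_mul, hself]
  rw [this, norm_mul, norm_pow, hpK, aux_norm_coprime' hna hpK hndvd hpos.ne', mul_one, hfac]
  rw [zpow_neg, zpow_natCast, inv_pow]

lemma aux_dvd' (n k : ℕ) (hk : k ≤ n) :
    (n : ℤ) ∣ ((k.factorial * (n-1).choose k : ℕ) : ℤ) - (-1)^k * (k.factorial : ℕ) := by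
  rw [← ZMod.intCast_zmod_eq_zero_iff_dvd]
  have h := ZMod.cast_descFactorial (n := k) (p := n) hk
  rw [Nat.descFactorial_eq_factorial_mul_choose] at h
  push_cast at h ⊢
  rw [h]
  ring

-- Legendre bound: (p-1) * v_p(k!) ≤ k

lemma aux_legendre' (k : ℕ) : ((padicValNat p k.factorial : ℝ)) ≤ (k : ℝ) / ((p:ℝ) - 1) := by
  have h := sub_one_mul_padicValNat_factorial (p := p) k
  have h2 : (p - 1) * padicValNat p k.factorial ≤ k := h.le.trans (Nat.sub_le _ _)
  have hp1 : (1:ℝ) < (p:ℝ) := by exact_mod_cast hp.out.one_lt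
  rw [le_div_iff₀ (by linarith)]
  have hpm : ((p - 1 : ℕ) : ℝ) = (p:ℝ) - 1 := by
    have h1 : 1 ≤ p := hp.out.one_lt.le
    push_cast [h1]; ring
  calc (padicValNat p k.factorial : ℝ) * ((p:ℝ) - 1)
      = (((p-1) * padicValNat p k.factorial : ℕ) : ℝ) := by rw [Nat.cast_mul, hpm]; ring
    _ ≤ k := by exact_mod_cast h2

-- (p-1)*v + 1 ≤ p^v

lemma aux_pow_ge' (v : ℕ) : (p - 1) * v + 1 ≤ p ^ v := by
  induction v with
  | zero => simp
  | succ v ih =>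
    have hp2 : 2 ≤ p := hp.out.two_le
    have h1 : 1 ≤ p ^ v := Nat.one_le_pow _ _ (by omega)
    calc (p-1) * (v+1) + 1 = ((p-1)*v + 1) + (p-1) := by ring
      _ ≤ p ^ v + (p-1) * p ^ v := by
          exact Nat.add_le_add ih (Nat.le_mul_of_pos_right _ (by omega))
      _ = p ^ (v+1) := by
          have e1 : p ^ v + (p-1) * p^v = (1 + (p-1)) * p^v := by ring
          rw [e1, show 1 + (p-1) = p by omega, pow_succ, mul_comm]

-- v_p(m) ≤ (m-1)/(p-1) for m ≥ 1

lemma aux_val_le' (m : ℕ) (hm : m ≠ 0) :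
    ((padicValNat p m : ℝ)) ≤ ((m:ℝ) - 1) / ((p:ℝ) - 1) := by
  set v := padicValNat p m with hv
  have hdvd : p ^ v ∣ m := pow_padicValNat_dvd
  have hle : p ^ v ≤ m := Nat.le_of_dvd (Nat.pos_of_ne_zero hm) hdvd
  have h := aux_pow_ge' (p := p) v
  have h2 : (p-1) * v ≤ m - 1 := by omega
  have hp1 : (1:ℝ) < (p:ℝ) := by exact_mod_cast hp.out.one_lt
  rw [le_div_iff₀ (by linarith)]
  have hm1 : 1 ≤ m := Nat.pos_of_ne_zero hm
  have hpm : ((p - 1 : ℕ) : ℝ) = (p:ℝ) - 1 := by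
    have h1 : 1 ≤ p := hp.out.one_lt.le
    push_cast [h1]; ring
  calc (v : ℝ) * ((p:ℝ) - 1) = (((p-1) * v : ℕ) : ℝ) := by rw [Nat.cast_mul, hpm]; ring
    _ ≤ ((m - 1 : ℕ) : ℝ) := by exact_mod_cast h2
    _ = (m:ℝ) - 1 := by push_cast [hm1]; ring

include hna hpK in
lemma aux_choose_norm' (n k : ℕ) (hk : k ≤ n) :
    ‖(((n-1).choose k : ℕ) : K) - (-1)^k‖
      ≤ ‖(n:K)‖ * (p:ℝ) ^ (padicValNat p k.factorial) := by
  haveI := aux_charZero' hna hpK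
  obtain ⟨e, he⟩ := aux_dvd' n k hk
  have hK : (k.factorial : K) * ((((n-1).choose k : ℕ) : K) - (-1)^k) = (n:K) * (e:K) := by
    have := congrArg (fun z : ℤ => (z : K)) he
    push_cast at this
    linear_combination this
  have hkf0 : ((k.factorial : ℕ) : K) ≠ 0 := Nat.cast_ne_zero.mpr k.factorial_ne_zero
  have heq : (((n-1).choose k : ℕ) : K) - (-1)^k = (n:K) * (e:K) / (k.factorial : K) := by
    field_simp
    linear_combination hK
  have hkfK : ‖((k.factorial : ℕ) : K)‖ = ((p:ℝ))^(-(padicValNat p k.factorial : ℤ)) :=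
    aux_norm_natCast' hna hpK k.factorial_ne_zero
  haveI := IsUltrametricDist.isUltrametricDist_of_isNonarchimedean_norm hna
  have hppos : (0:ℝ) < (p:ℝ) := by exact_mod_cast hp.out.pos
  rw [heq, norm_div, norm_mul, hkfK, zpow_neg, zpow_natCast, div_inv_eq_mul]
  calc ‖(n:K)‖ * ‖(e:K)‖ * (p:ℝ)^(padicValNat p k.factorial)
      ≤ ‖(n:K)‖ * 1 * (p:ℝ)^(padicValNat p k.factorial) := by
        apply mul_le_mul_of_nonneg_right _ (by positivity)
        apply mul_le_mul_of_nonneg_left (IsUltrametricDist.norm_intCast_le_one K e) (norm_nonneg _)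
    _ = ‖(n:K)‖ * (p:ℝ)^(padicValNat p k.factorial) := by ring

lemma aux_qpow' [CharZero K] (q : K) (n : ℕ) (hn : n ≠ 0) :
    q ^ n - 1 = (n:K) * ∑ k ∈ range n, (((n-1).choose k : ℕ) : K) * (q-1)^(k+1) / ((k:K)+1) := by
  have hq : q = (q - 1) + 1 := by ring
  rw [Finset.mul_sum]
  have key : ∀ k ∈ range n, (n:K) * ((((n-1).choose k : ℕ):K) * (q-1)^(k+1) / ((k:K)+1))
      = ((n.choose (k+1) : ℕ) : K) * (q-1)^(k+1) := by
    intro k _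
    have hnat : n * ((n-1).choose k) = n.choose (k+1) * (k+1) := by
      have h := Nat.add_one_mul_choose_eq (n-1) k
      rw [Nat.sub_add_cancel (Nat.one_le_iff_ne_zero.mpr hn)] at h
      exact h
    have hcast : (n:K) * (((n-1).choose k : ℕ):K) = ((n.choose (k+1) : ℕ):K) * ((k:K)+1) := by
      have := congrArg (fun m : ℕ => (m : K)) hnat
      push_cast at this
      exact_mod_cast this
    have hk0 : ((k:K)+1) ≠ 0 := Nat.cast_add_one_ne_zero k
    field_simp
    linear_combination (q-1)^(k+1) * hcast
  rw [Finset.sum_congr rfl key]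
  conv_lhs => rw [hq, add_pow]
  rw [Finset.sum_range_succ']
  simp only [pow_zero, one_pow, mul_one, one_mul, Nat.choose_zero_right, Nat.cast_one,
    Nat.sub_zero]
  rw [add_sub_cancel_right]
  exact Finset.sum_congr rfl fun k _ => by ring

end AuxLemmas

/-- `β_{0,q} = ∫_{ℤ_p} q^{-x} dμ_q(x) = (q-1)/log q`, where
`log q = -∑_{n≥1} (1-q)^n/n` is the p-adic logarithm. -/
theorem beta_zero_eq
(q : K) (hna : IsNonarchimedean (‖·‖ : K → ℝ)) (hpK : ‖(p : K)‖ = (p : ℝ)⁻¹)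
    (hq : ‖1 - q‖ < (p : ℝ) ^ (-1 / ((p : ℝ) - 1))) (hq1 : q ≠ 1)
    (L : K)
    (hL : Tendsto (fun N => ∑ n ∈ range N, -((1 - q) ^ (n + 1)) / ((n : K) + 1))
      atTop (𝓝 L)) :
    Tendsto
      (fun N => (qNum q (p ^ N))⁻¹ * ∑ x ∈ range (p ^ N), (q⁻¹) ^ x * q ^ x)
      atTop (𝓝 ((q - 1) / L)) := by
  haveI : CharZero K := aux_charZero' hna hpK
  haveI := IsUltrametricDist.isUltrametricDist_of_isNonarchimedean_norm hna
  have hp1 : (1:ℝ) < (p:ℝ) := by exact_mod_cast hp.out.one_lt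
  have hppos : (0:ℝ) < (p:ℝ) := by linarith
  set t : K := q - 1 with ht
  have ht0 : t ≠ 0 := sub_ne_zero.mpr hq1
  set r : ℝ := ‖t‖ with hr
  have hr0 : 0 < r := norm_pos_iff.mpr ht0
  set x : ℝ := (p:ℝ) ^ ((1:ℝ)/((p:ℝ)-1)) with hx
  have hx0 : 0 < x := Real.rpow_pos_of_pos hppos _
  -- ρ = r * x < 1
  have hrx : r * x < 1 := by
    have h1 : ‖1 - q‖ = r := by rw [hr, ht, ← norm_neg]; congr 1; ring
    have h2 : (p:ℝ) ^ (-1 / ((p:ℝ)-1)) = x⁻¹ := by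
      rw [hx, ← Real.rpow_neg hppos.le]
      congr 1
      ring
    rw [h1, h2] at hq
    calc r * x < x⁻¹ * x := by exact mul_lt_mul_of_pos_right hq hx0
      _ = 1 := inv_mul_cancel₀ hx0.ne'
  have hrx0 : 0 ≤ r * x := by positivity
  -- the sequence A
  set A : ℕ → K := fun N =>
    ∑ k ∈ range (p^N), (((p^N-1).choose k : ℕ) : K) * t^(k+1) / ((k:K)+1) with hA
  have hpn0 : ∀ N : ℕ, (p^N : ℕ) ≠ 0 := fun N => (Nat.pow_pos (n := N) hp.out.pos).ne'
  have hpnK : ∀ N : ℕ, ((p^N : ℕ) : K) ≠ 0 := fun N => Nat.cast_ne_zero.mpr (hpn0 N)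
  have hAq : ∀ N : ℕ, q ^ (p^N) - 1 = ((p^N : ℕ):K) * A N := fun N =>
    aux_qpow' q (p^N) (hpn0 N)
  -- partial sums
  set S : ℕ → K := fun M => ∑ n ∈ range M, -((1 - q) ^ (n + 1)) / ((n : K) + 1) with hS
  -- term rewriting of S
  have hSterm : ∀ n : ℕ, -((1 - q) ^ (n + 1)) / ((n : K) + 1) = (-1)^n * t^(n+1) / ((n:K)+1) := by
    intro n
    have : (1 - q) = -t := by rw [ht]; ring
    rw [this, neg_pow, pow_succ]
    ring
  -- norm of a single "log tail" term : ‖t^(m+1)/(m+1)‖ ≤ r * (r*x)^m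
  have htail : ∀ m : ℕ, ‖t^(m+1) / ((m:K)+1)‖ ≤ r * (r*x)^m := by
    intro m
    have hm1 : ((m:K)+1) = ((m+1 : ℕ) : K) := by push_cast; ring
    have hnm : ‖((m+1 : ℕ) : K)‖ = (p:ℝ) ^ (-(padicValNat p (m+1) : ℤ)) :=
      aux_norm_natCast' hna hpK (Nat.succ_ne_zero m)
    rw [norm_div, norm_pow, hm1, hnm, zpow_neg, zpow_natCast, div_inv_eq_mul]
    have hv : (p:ℝ) ^ (padicValNat p (m+1)) ≤ x ^ m := by
      have h1 := aux_val_le' (p := p) (m+1) (Nat.succ_ne_zero m)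
      have h2 : ((m+1 : ℕ):ℝ) - 1 = (m:ℝ) := by push_cast; ring
      rw [h2] at h1
      calc (p:ℝ) ^ (padicValNat p (m+1)) = (p:ℝ) ^ ((padicValNat p (m+1) : ℝ)) := by
            rw [Real.rpow_natCast]
        _ ≤ (p:ℝ) ^ ((m:ℝ) / ((p:ℝ)-1)) := Real.rpow_le_rpow_of_exponent_le hp1.le h1
        _ = x ^ m := by
            rw [hx, ← Real.rpow_natCast ((p:ℝ) ^ ((1:ℝ)/((p:ℝ)-1))) m, ← Real.rpow_mul hppos.le]
            congr 1
            ring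
    calc ‖t‖^(m+1) * (p:ℝ) ^ (padicValNat p (m+1)) ≤ ‖t‖^(m+1) * x^m := by
          apply mul_le_mul_of_nonneg_left hv (by positivity)
      _ = r * (r*x)^m := by rw [← hr, pow_succ, mul_pow]; ring
  -- difference bound
  have hdiff : ∀ N : ℕ, ‖A N - S (p^N)‖ ≤ ((p:ℝ)⁻¹)^N := by
    intro N
    have hAd : A N - S (p^N)
        = ∑ k ∈ range (p^N),
            ((((p^N-1).choose k : ℕ) : K) - (-1)^k) * (t^(k+1) / ((k:K)+1)) := by
      rw [hA, hS, ← Finset.sum_sub_distrib]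
      refine Finset.sum_congr rfl fun k _ => ?_
      rw [hSterm k]
      ring
    rw [hAd]
    apply IsUltrametricDist.norm_sum_le_of_forall_le_of_nonneg (by positivity)
    intro k hk
    rw [Finset.mem_range] at hk
    have hb1 := aux_choose_norm' hna hpK (p^N) k hk.le
    have hnormpn : ‖((p^N : ℕ):K)‖ = ((p:ℝ)⁻¹)^N := by
      push_cast
      rw [norm_pow, hpK]
    rw [hnormpn] at hb1
    -- rewrite the norm of the second factor explicitly
    have hm1 : ((k:K)+1) = ((k+1 : ℕ) : K) := by push_cast; ring
    have hnm : ‖((k+1 : ℕ) : K)‖ = (p:ℝ) ^ (-(padicValNat p (k+1) : ℤ)) :=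
      aux_norm_natCast' hna hpK (Nat.succ_ne_zero k)
    have hx1 : (p:ℝ) ^ (padicValNat p k.factorial) * (p:ℝ) ^ (padicValNat p (k+1))
        ≤ x ^ (k+1) := by
      have hmulv : padicValNat p k.factorial + padicValNat p (k+1)
          = padicValNat p ((k+1).factorial) := by
        rw [Nat.factorial_succ, padicValNat.mul (Nat.succ_ne_zero k) k.factorial_ne_zero]
        ring
      rw [← pow_add, hmulv]
      have hleg := aux_legendre' (p := p) (k+1)
      calc (p:ℝ) ^ (padicValNat p ((k+1).factorial))
          = (p:ℝ) ^ ((padicValNat p ((k+1).factorial) : ℝ)) := by rw [Real.rpow_natCast]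
        _ ≤ (p:ℝ) ^ (((k+1:ℕ):ℝ) / ((p:ℝ)-1)) := Real.rpow_le_rpow_of_exponent_le hp1.le hleg
        _ = x ^ (k+1) := by
            rw [hx, ← Real.rpow_natCast ((p:ℝ) ^ ((1:ℝ)/((p:ℝ)-1))) (k+1),
              ← Real.rpow_mul hppos.le]
            congr 1
            push_cast
            ring
    rw [norm_mul, norm_div, norm_pow, hm1, hnm, zpow_neg, zpow_natCast, div_inv_eq_mul]
    calc ‖(((p^N-1).choose k : ℕ) : K) - (-1)^k‖ *
          (‖t‖^(k+1) * (p:ℝ) ^ (padicValNat p (k+1)))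
        ≤ (((p:ℝ)⁻¹)^N * (p:ℝ) ^ (padicValNat p k.factorial)) *
          (‖t‖^(k+1) * (p:ℝ) ^ (padicValNat p (k+1))) := by
          apply mul_le_mul_of_nonneg_right hb1 (by positivity)
      _ = ((p:ℝ)⁻¹)^N * (((p:ℝ) ^ (padicValNat p k.factorial) * (p:ℝ) ^ (padicValNat p (k+1)))
            * r^(k+1)) := by rw [← hr]; ring
      _ ≤ ((p:ℝ)⁻¹)^N * (x^(k+1) * r^(k+1)) := by
          apply mul_le_mul_of_nonneg_left _ (by positivity)
          apply mul_le_mul_of_nonneg_right hx1 (by positivity)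
      _ = ((p:ℝ)⁻¹)^N * (r*x)^(k+1) := by rw [mul_pow]; ring
      _ ≤ ((p:ℝ)⁻¹)^N * 1 := by
          apply mul_le_mul_of_nonneg_left (pow_le_one₀ hrx0 hrx.le) (by positivity)
      _ = ((p:ℝ)⁻¹)^N := mul_one _
  -- S (p^N) → L
  have hpow : Tendsto (fun N : ℕ => p ^ N) atTop atTop :=
    tendsto_pow_atTop_atTop_of_one_lt hp.out.one_lt
  have hSL : Tendsto (fun N => S (p^N)) atTop (𝓝 L) := hL.comp hpow
  -- A → L
  have hAL : Tendsto A atTop (𝓝 L) := by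
    have h0 : Tendsto (fun N => A N - S (p^N)) atTop (𝓝 0) := by
      apply squeeze_zero_norm hdiff
      apply tendsto_pow_atTop_nhds_zero_of_lt_one (by positivity)
      rw [inv_lt_one_iff₀]; right; exact hp1
    have := h0.add hSL
    rw [zero_add] at this
    convert this using 2 with N
    ring
  -- ‖L‖ = r, L ≠ 0
  have hLt : ‖L - t‖ ≤ r * (r * x) := by
    have hSd : ∀ M : ℕ, ‖S (M+1) - t‖ ≤ r * (r*x) := by
      intro M
      have hsplit : S (M+1) - t = ∑ i ∈ range M, -((1 - q) ^ (i + 2)) / (((i+1) : K) + 1) := by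
        simp only [hS]
        rw [Finset.sum_range_succ']
        simp only [Nat.cast_zero, zero_add, pow_one, div_one]
        have : -(1 - q) = t := by rw [ht]; ring
        rw [this]
        rw [add_sub_cancel_right]
        refine Finset.sum_congr rfl fun i _ => ?_
        push_cast
        ring_nf
      rw [hsplit]
      apply IsUltrametricDist.norm_sum_le_of_forall_le_of_nonneg (by positivity)
      intro i _
      have h1 : -((1 - q) ^ (i + 2)) / (((i+1) : K) + 1)
          = (-1)^(i+1) * (t^(i+2) / (((i+1):K)+1)) := by
        have : (1 - q) = -t := by rw [ht]; ring
        rw [this, neg_pow, pow_succ]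
        ring
      rw [h1, norm_mul]
      have : ‖(-1:K)^(i+1)‖ = 1 := by
        rw [norm_pow, norm_neg, norm_one, one_pow]
      rw [this, one_mul]
      have h2 : ((i+1:ℕ):K) + 1 = (((i:ℕ):K)+1) + 1 := by push_cast; ring
      calc ‖t^(i+2) / (((i+1):K)+1)‖ ≤ r * (r*x)^(i+1) := by
            have := htail (i+1)
            convert this using 3
            push_cast
            ring
        _ ≤ r * (r*x) := by
            apply mul_le_mul_of_nonneg_left _ hr0.le
            calc (r*x)^(i+1) ≤ (r*x)^1 := pow_le_pow_of_le_one hrx0 hrx.le (by omega)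
              _ = r*x := pow_one _
    have htend : Tendsto (fun M => S (M+1) - t) atTop (𝓝 (L - t)) := by
      have : Tendsto (fun M : ℕ => M + 1) atTop atTop := tendsto_add_atTop_nat 1
      exact ((hL.comp this).sub tendsto_const_nhds)
    have := htend.norm
    exact le_of_tendsto this (Eventually.of_forall hSd)
  have hLtlt : ‖L - t‖ < r := by
    calc ‖L - t‖ ≤ r * (r * x) := hLt
      _ < r * 1 := by exact mul_lt_mul_of_pos_left hrx hr0
      _ = r := mul_one r
  have hLnorm : ‖L‖ = r := by
    have hle : ‖L‖ ≤ r := by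
      have : L = t + (L - t) := by ring
      rw [this]
      calc ‖t + (L - t)‖ ≤ max ‖t‖ ‖L - t‖ := hna t (L - t)
        _ = r := by rw [max_eq_left (le_of_lt hLtlt), hr]
    have hge : r ≤ ‖L‖ := by
      by_contra hcon
      push_neg at hcon
      have : t = L - (L - t) := by ring
      have h := hna L (-(L - t))
      simp only at h
      rw [← sub_eq_add_neg, ← this, norm_neg] at h
      rcases max_cases ‖L‖ ‖L - t‖ with ⟨hm, _⟩ | ⟨hm, _⟩ <;> rw [hm] at h
      · exact absurd (lt_of_le_of_lt h hcon) (lt_irrefl r)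
      · exact absurd (lt_of_le_of_lt h hLtlt) (lt_irrefl r)
    linarith
  have hL0 : L ≠ 0 := by
    intro h
    rw [h, norm_zero] at hLnorm
    exact hr0.ne hLnorm
  -- q^(p^N) is never 1
  have hqn : ∀ N : ℕ, q ^ (p^N) ≠ 1 := by
    by_contra hcon
    push_neg at hcon
    obtain ⟨M, hM⟩ := hcon
    have hev : ∀ N ≥ M, A N = 0 := by
      intro N hN
      have hpowq : q ^ (p^N) = 1 := by
        have hsplit : p ^ N = p ^ M * p ^ (N - M) := by
          rw [← pow_add]
          congr 1
          omega
        rw [hsplit, pow_mul, hM, one_pow]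
      have h := hAq N
      rw [hpowq, sub_self] at h
      exact (mul_eq_zero.mp h.symm).resolve_left (hpnK N)
    have hA0 : Tendsto A atTop (𝓝 (0:K)) := by
      have hev' : (fun _ : ℕ => (0:K)) =ᶠ[atTop] A :=
        eventually_atTop.mpr ⟨M, fun N hN => (hev N hN).symm⟩
      exact Tendsto.congr' hev' tendsto_const_nhds
    exact hL0 (tendsto_nhds_unique hAL hA0)
  -- q ≠ 0
  have hq0 : q ≠ 0 := by
    intro h
    rw [h, sub_zero, norm_one] at hq
    have hlt1 : (p:ℝ) ^ (-1 / ((p:ℝ) - 1)) < 1 :=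
      Real.rpow_lt_one_of_one_lt_of_neg hp1 (by
        apply div_neg_of_neg_of_pos <;> linarith)
    linarith
  -- identification of the sequence
  have hfinal : ∀ N : ℕ, (q - 1) / A N
      = (qNum q (p ^ N))⁻¹ * ∑ x ∈ range (p ^ N), (q⁻¹) ^ x * q ^ x := by
    intro N
    have hsum : ∑ x ∈ range (p ^ N), (q⁻¹) ^ x * q ^ x = ((p^N : ℕ) : K) := by
      have hone : ∀ x ∈ range (p^N), (q⁻¹)^x * q^x = 1 := by
        intro x _
        rw [← mul_pow, inv_mul_cancel₀ hq0, one_pow]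
      rw [Finset.sum_congr rfl hone, Finset.sum_const, Finset.card_range, nsmul_eq_mul, mul_one]
    have hAN0 : A N ≠ 0 := by
      intro h
      have h2 := hAq N
      rw [h, mul_zero, sub_eq_zero] at h2
      exact hqn N h2
    have h1q : (1:K) - q ≠ 0 := fun h => hq1 (by
      have : (1:K) = q := by linear_combination h
      exact this.symm)
    rw [hsum, qNum]
    rw [show (1:K) - q ^ (p^N) = -( ((p^N:ℕ):K) * A N) from by rw [← hAq N]; ring]
    rw [← ht]
    rw [inv_div, div_mul_eq_mul_div,
      div_eq_div_iff hAN0 (neg_ne_zero.mpr (mul_ne_zero (hpnK N) hAN0))]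
    ring
  exact (tendsto_const_nhds.div hAL hL0).congr hfinal
end

section
/- If μ_q is a 1-admissible distribution on ℤ_p, i.e. |μ_q(a + p^N ℤ_p)|_p ≤ c_N / |[p^N]_q|_p with c_N → 0, then μ_q is a weakly p-adic q-invariant distribution: |[p^n]_q μ_q(a+p^n ℤ_p) − [p^{n+1}]_q μ_q(a+p^{n+1} ℤ_p)|_p ≤ δ_n for some sequence δ_n → 0 independent of a. -/
open Filter Finset Topology

variable {p : ℕ} [hp : Fact p.Prime] {K : Type*} [NontriviallyNormedField K]

-- `c / ‖a‖` is `0` when `a = 0`, so `c` itself may be negative: only `|c|` bounds `‖a * b‖`.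
theorem norm_mul_le_abs_of_norm_le_div {R : Type*} [NonUnitalSeminormedRing R] {a b : R} {c : ℝ}
    (h : ‖b‖ ≤ c / ‖a‖) : ‖a * b‖ ≤ |c| := by
  rcases (norm_nonneg a).eq_or_lt with ha | ha
  · calc ‖a * b‖ ≤ ‖a‖ * ‖b‖ := norm_mul_le a b
      _ = 0 := by rw [← ha, zero_mul]
      _ ≤ |c| := abs_nonneg c
  · calc ‖a * b‖ ≤ ‖a‖ * ‖b‖ := norm_mul_le a b
      _ ≤ ‖a‖ * (c / ‖a‖) := by gcongr
      _ = c := mul_div_cancel₀ c ha.ne'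
      _ ≤ |c| := le_abs_self c

theorem exists_tendsto_zero_norm_sub_succ_le {ι E : Type*} [SeminormedAddCommGroup E]
    {u : ι → ℕ → E} {c : ℕ → ℝ} (hc : Tendsto c atTop (𝓝 0)) (hu : ∀ x n, ‖u x n‖ ≤ |c n|) :
    ∃ δ : ℕ → ℝ, Tendsto δ atTop (𝓝 0) ∧ ∀ x n, ‖u x n - u x (n + 1)‖ ≤ δ n := by
  have habs : Tendsto (fun n => |c n|) atTop (𝓝 0) := by simpa using hc.abs
  refine ⟨fun n => |c n| + |c (n + 1)|, ?_, fun x n => ?_⟩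
  · simpa using habs.add (habs.comp (tendsto_add_atTop_nat 1))
  · exact (norm_sub_le _ _).trans (add_le_add (hu x n) (hu x (n + 1)))

theorem one_admissible_implies_weakly_invariant_general
(q : K)
    (μ : PadicInt p → ℕ → K)
    (hadm : ∃ c : ℕ → ℝ, Tendsto c atTop (𝓝 0) ∧
      ∀ (x : PadicInt p) (n : ℕ), ‖μ x n‖ ≤ c n / ‖qNum q (p ^ n)‖) :
    ∃ δ : ℕ → ℝ, Tendsto δ atTop (𝓝 0) ∧
      ∀ (x : PadicInt p) (n : ℕ),
        ‖qNum q (p ^ n) * μ x n - qNum q (p ^ (n + 1)) * μ x (n + 1)‖ ≤ δ n := by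
  obtain ⟨c, hc, hbound⟩ := hadm
  exact exists_tendsto_zero_norm_sub_succ_le hc fun x n =>
    norm_mul_le_abs_of_norm_le_div (hbound x n)

/-- a 1-admissible distribution (`‖μ_q(a+p^Nℤ_p)‖ ≤ c_N/‖[p^N]_q‖`, `c_N → 0`)
is a weakly p-adic q-invariant distribution. -/
theorem one_admissible_implies_weakly_invariant
(q : K) (hna : IsNonarchimedean (‖·‖ : K → ℝ)) (hpK : ‖(p : K)‖ = (p : ℝ)⁻¹)
    (hq : ‖1 - q‖ < (p : ℝ) ^ (-1 / ((p : ℝ) - 1))) (hq1 : q ≠ 1)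
    (μ : PadicInt p → ℕ → K) (hμ : IsDist μ)
    (hadm : ∃ c : ℕ → ℝ, Tendsto c atTop (𝓝 0) ∧
      ∀ (x : PadicInt p) (n : ℕ), ‖μ x n‖ ≤ c n / ‖qNum q (p ^ n)‖) :
    ∃ δ : ℕ → ℝ, Tendsto δ atTop (𝓝 0) ∧
      ∀ (x : PadicInt p) (n : ℕ),
        ‖qNum q (p ^ n) * μ x n - qNum q (p ^ (n + 1)) * μ x (n + 1)‖ ≤ δ n :=
  one_admissible_implies_weakly_invariant_general q μ hadm
end

section
/- If μ_q is a strongly p-adic q-invariant distribution on ℤ_p (i.e. |[p^n]_q μ_q(a+p^nℤ_p) − [p^{n+1}]_q μ_q(a+p^{n+1}ℤ_p)|_p ≤ C p^{-n} for a constant C > 0), then its Radon-Nikodym derivative f_{μ_q}(x) = lim_N [p^N]_q μ_q(x+p^N ℤ_p) is a Lipschitz function from ℤ_p to ℂ_p: there is C₁ > 0 with |f_{μ_q}(x) − f_{μ_q}(y)|_p ≤ C₁ |x−y|_p for all x, y ∈ ℤ_p. -/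
open Filter Finset Topology

variable {p : ℕ} [hp : Fact p.Prime] {K : Type*} [NontriviallyNormedField K]

/-- Proposition 1: if `μ_q` is strongly p-adic q-invariant then
`f_{μ_q}` is a Lipschitz function on `ℤ_p`. -/
theorem radon_nikodym_derivative_lipschitz
(q : K) (hna : IsNonarchimedean (‖·‖ : K → ℝ)) (hpK : ‖(p : K)‖ = (p : ℝ)⁻¹)
    (hq : ‖1 - q‖ < (p : ℝ) ^ (-1 / ((p : ℝ) - 1))) (hq1 : q ≠ 1)
    (μ : PadicInt p → ℕ → K) (hμ : IsDist μ)
    (hstrong : ∃ C : ℝ, 0 < C ∧ ∀ (x : PadicInt p) (n : ℕ),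
      ‖qNum q (p ^ n) * μ x n - qNum q (p ^ (n + 1)) * μ x (n + 1)‖ ≤ C * (p : ℝ) ^ (-(n : ℤ)))
    (f : PadicInt p → K)
    (hf : ∀ x, Tendsto (fun N => qNum q (p ^ N) * μ x N) atTop (𝓝 (f x))) :
    ∃ C₁ : ℝ, 0 < C₁ ∧ ∀ x y : PadicInt p, ‖f x - f y‖ ≤ C₁ * ‖x - y‖ := by
  obtain ⟨C, hC, hs⟩ := hstrong
  refine ⟨C, hC, fun x y => ?_⟩
  rcases eq_or_ne x y with rfl | hxy
  · simp
  · have hd : x - y ≠ 0 := sub_ne_zero.mpr hxy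
    set m : ℕ := ((x - y).valuation : ℤ).toNat with hm
    have hval : 0 ≤ ((x - y).valuation : ℤ) := Int.natCast_nonneg _
    have hnorm : ‖x - y‖ = (p : ℝ) ^ (-(m : ℤ)) := by
      rw [PadicInt.norm_eq_zpow_neg_valuation hd]
      congr 1
    have hp1 : (1 : ℝ) < (p : ℝ) := by exact_mod_cast hp.out.one_lt
    have hppos : (0 : ℝ) < (p : ℝ) := by positivity
    have hμeq : μ x m = μ y m := hμ.1 x y m (le_of_eq hnorm)
    have key : ∀ (z : PadicInt p) (n : ℕ),
        ‖qNum q (p ^ n) * μ z n - f z‖ ≤ C * (p : ℝ) ^ (-(n : ℤ)) := by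
      intro z n
      have h1 : ∀ N, n ≤ N →
          ‖qNum q (p ^ n) * μ z n - qNum q (p ^ N) * μ z N‖ ≤ C * (p : ℝ) ^ (-(n : ℤ)) := by
        intro N hN
        induction N, hN using Nat.le_induction with
        | base => simp; positivity
        | succ N hN ih =>
          have heq : qNum q (p ^ n) * μ z n - qNum q (p ^ (N + 1)) * μ z (N + 1)
              = (qNum q (p ^ n) * μ z n - qNum q (p ^ N) * μ z N)
                + (qNum q (p ^ N) * μ z N - qNum q (p ^ (N + 1)) * μ z (N + 1)) := by ring
          rw [heq]
          refine (hna _ _).trans (max_le ih ((hs z N).trans ?_))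
          have h3 : (p : ℝ) ^ (-(N : ℤ)) ≤ (p : ℝ) ^ (-(n : ℤ)) :=
            zpow_le_zpow_right₀ hp1.le (by omega)
          nlinarith [h3, hC.le]
      have h2 : Tendsto (fun N => ‖qNum q (p ^ n) * μ z n - qNum q (p ^ N) * μ z N‖)
          atTop (𝓝 ‖qNum q (p ^ n) * μ z n - f z‖) :=
        ((tendsto_const_nhds.sub (hf z)).norm)
      exact le_of_tendsto h2 (eventually_atTop.2 ⟨n, h1⟩)
    have heq2 : f x - f y = (f x - qNum q (p ^ m) * μ x m)
        + (qNum q (p ^ m) * μ y m - f y) := by rw [hμeq]; ring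
    rw [heq2, hnorm]
    refine (hna _ _).trans (max_le ?_ ?_)
    · show ‖_‖ ≤ _
      rw [norm_sub_rev]; exact key x m
    · exact key y m
end

section
/- For every C¹ function f : ℤ_p → ℂ_p, the distribution μ_{f,q} is strongly p-adic q-invariant: there exists C > 0 with |[p^n]_q μ_{f,q}(a+p^nℤ_p) − [p^{n+1}]_q μ_{f,q}(a+p^{n+1}ℤ_p)|_p ≤ C p^{-n} for all a and n. -/
open Filter Finset Topology

variable {p : ℕ} [hp : Fact p.Prime] {K : Type*} [NontriviallyNormedField K]

set_option linter.unusedSectionVars false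
set_option maxHeartbeats 1000000

section AuxLemmas

lemma sum_range_mul' {β : Type*} [AddCommMonoid β] (g : ℕ → β) (a b : ℕ) :
    ∑ j ∈ range (a * b), g j = ∑ r ∈ range b, ∑ i ∈ range a, g (i + a * r) := by
  induction b with
  | zero => simp
  | succ b ih =>
    rw [Nat.mul_succ, Finset.sum_range_add, ih, Finset.sum_range_succ]
    congr 1
    exact Finset.sum_congr rfl fun i _ => by rw [Nat.add_comm]

variable (hna : IsNonarchimedean (‖·‖ : K → ℝ))
include hna

lemma nonarch_sum {α : Type*} (s : Finset α) (g : α → K) {B : ℝ} (hB : 0 ≤ B)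
    (h : ∀ a ∈ s, ‖g a‖ ≤ B) : ‖∑ a ∈ s, g a‖ ≤ B := by
  classical
  induction s using Finset.cons_induction with
  | empty => simpa using hB
  | cons a s ha ih =>
    rw [Finset.sum_cons]
    refine le_trans (hna _ _) (max_le (h a (Finset.mem_cons_self a s)) (ih ?_))
    exact fun b hb => h b (Finset.mem_cons_of_mem hb)

lemma nat_norm_le_one (n : ℕ) : ‖(n : K)‖ ≤ 1 := by
  induction n with
  | zero => simp
  | succ n ih =>
    push_cast
    exact le_trans (hna _ _) (max_le ih (by simp))

lemma norm_add_eq_left {x y : K} (h : ‖y‖ < ‖x‖) : ‖x + y‖ = ‖x‖ := by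
  refine le_antisymm (le_trans (hna x y) (max_le le_rfl h.le)) ?_
  have h2 : ‖x‖ ≤ max ‖x + y‖ ‖y‖ := by simpa using hna (x + y) (-y)
  rcases max_cases ‖x + y‖ ‖y‖ with ⟨he, _⟩ | ⟨he, _⟩
  · rw [he] at h2; exact h2
  · rw [he] at h2; linarith

lemma one_sub_pow_le {Q : K} (hQ : ‖Q‖ ≤ 1) (j : ℕ) : ‖1 - Q ^ j‖ ≤ ‖1 - Q‖ := by
  induction j with
  | zero => simp
  | succ j ih =>
    have he : 1 - Q^(j+1) = (1 - Q^j) + Q^j * (1 - Q) := by ring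
    rw [he]
    refine le_trans (hna _ _) (max_le ih ?_)
    show ‖Q^j * (1 - Q)‖ ≤ ‖1 - Q‖
    rw [norm_mul]
    calc ‖Q^j‖ * ‖1 - Q‖ ≤ 1 * ‖1 - Q‖ := by
          apply mul_le_mul_of_nonneg_right _ (norm_nonneg _)
          rw [norm_pow]; exact pow_le_one₀ (norm_nonneg Q) hQ
      _ = ‖1 - Q‖ := one_mul _

lemma bound_pow (hp2 : 2 ≤ p) : ((p:ℝ) ^ (-1 / ((p:ℝ) - 1))) ^ (p - 1) = (p:ℝ)⁻¹ := by
  have hp0 : (0:ℝ) ≤ (p:ℝ) := by positivity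
  have hp1 : (1:ℝ) < (p:ℝ) := by exact_mod_cast hp2
  rw [← Real.rpow_natCast ((p:ℝ) ^ (-1 / ((p:ℝ) - 1))) (p-1), ← Real.rpow_mul hp0]
  have hc : ((p - 1 : ℕ) : ℝ) = (p:ℝ) - 1 := by
    have : (1:ℕ) ≤ p := by omega
    push_cast [this]; ring
  rw [hc]
  have hne : (p:ℝ) - 1 ≠ 0 := by linarith
  have : -1 / ((p:ℝ) - 1) * ((p:ℝ) - 1) = -1 := by field_simp
  rw [this]
  simpa using Real.rpow_neg_one (p:ℝ)

lemma step_lemma (hpK : ‖(p : K)‖ = (p : ℝ)⁻¹)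
    {r : K} (hr : ‖1 - r‖ < (p:ℝ) ^ (-1 / ((p:ℝ) - 1))) :
    ‖1 - r ^ p‖ = (p:ℝ)⁻¹ * ‖1 - r‖ := by
  have hp2 : 2 ≤ p := hp.out.two_le
  have hp1 : (1:ℝ) < (p:ℝ) := by exact_mod_cast hp2
  have hb1 : (p:ℝ) ^ (-1 / ((p:ℝ) - 1)) < 1 :=
    Real.rpow_lt_one_of_one_lt_of_neg hp1
      (div_neg_of_neg_of_pos (by norm_num) (by linarith))
  by_cases hr1 : r = 1
  · simp [hr1]
  set s := r - 1 with hs_def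
  have hs0 : s ≠ 0 := sub_ne_zero.mpr hr1
  have hsn : ‖s‖ = ‖1 - r‖ := by rw [hs_def, norm_sub_rev]
  have hs_pos : 0 < ‖s‖ := norm_pos_iff.mpr hs0
  have hs1 : ‖s‖ < 1 := by rw [hsn]; exact lt_trans hr hb1
  have hsp : ‖s‖ ^ (p - 1) < (p:ℝ)⁻¹ := by
    rw [← bound_pow hna hp2]
    exact pow_lt_pow_left₀ (by rw [hsn]; exact hr) (norm_nonneg s) (by omega)
  have hrs : r = s + 1 := by rw [hs_def]; ring
  have h1 : r ^ p = ∑ j ∈ range (p+1), s ^ j * (p.choose j : K) := by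
    rw [hrs, add_pow]; simp
  have expand : r ^ p - 1 = (p:K) * s + ∑ j ∈ Finset.Ico 2 (p+1), s ^ j * (p.choose j : K) := by
    rw [h1, Finset.range_eq_Ico,
      ← Finset.sum_Ico_consecutive _ (by omega : 0 ≤ 2) (by omega : 2 ≤ p+1)]
    have h2 : ∑ j ∈ Finset.Ico 0 2, s ^ j * (p.choose j : K) = 1 + s * (p:K) := by
      rw [← Finset.range_eq_Ico]
      simp [Finset.sum_range_succ]
    rw [h2]; ring
  set B : ℝ := max ((p:ℝ)⁻¹ * ‖s‖^2) (‖s‖^p) with hB_def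
  have hB0 : 0 ≤ B := le_trans (by positivity) (le_max_right _ _)
  have hterm : ∀ j ∈ Finset.Ico 2 (p+1), ‖s ^ j * (p.choose j : K)‖ ≤ B := by
    intro j hj
    simp only [Finset.mem_Ico] at hj
    rw [norm_mul, norm_pow]
    by_cases hjp : j = p
    · subst hjp
      simp [Nat.choose_self]
      exact le_max_right _ _
    · have hjlt : j < p := by omega
      obtain ⟨t, ht⟩ := hp.out.dvd_choose_self (by omega : j ≠ 0) hjlt
      have hC : ‖(p.choose j : K)‖ ≤ (p:ℝ)⁻¹ := by
        rw [ht]; push_cast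
        rw [norm_mul, hpK]
        calc (p:ℝ)⁻¹ * ‖(t:K)‖ ≤ (p:ℝ)⁻¹ * 1 :=
              mul_le_mul_of_nonneg_left (nat_norm_le_one hna t) (by positivity)
          _ = (p:ℝ)⁻¹ := mul_one _
      have hpow : ‖s‖ ^ j ≤ ‖s‖ ^ 2 :=
        pow_le_pow_of_le_one (norm_nonneg s) hs1.le (by omega)
      calc ‖s‖ ^ j * ‖(p.choose j : K)‖ ≤ ‖s‖^2 * (p:ℝ)⁻¹ :=
            mul_le_mul hpow hC (norm_nonneg _) (by positivity)
        _ = (p:ℝ)⁻¹ * ‖s‖^2 := by ring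
        _ ≤ B := le_max_left _ _
  have hBlt : B < ‖(p:K) * s‖ := by
    rw [norm_mul, hpK]
    apply max_lt
    · have : ‖s‖^2 < ‖s‖ := by nlinarith
      exact mul_lt_mul_of_pos_left this (by positivity)
    · have hpp : ‖s‖ ^ p = ‖s‖^(p-1) * ‖s‖ := by
        rw [← pow_succ]; congr 1; omega
      rw [hpp]
      exact mul_lt_mul_of_pos_right hsp hs_pos
  have heq := norm_add_eq_left hna (x := (p:K)*s)
    (y := ∑ j ∈ Finset.Ico 2 (p+1), s ^ j * (p.choose j : K))
    (lt_of_le_of_lt (nonarch_sum hna _ _ hB0 hterm) hBlt)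
  rw [norm_sub_rev, expand, heq, norm_mul, hpK, hsn]

lemma key_norm (hpK : ‖(p : K)‖ = (p : ℝ)⁻¹) {q : K}
    (hq : ‖1 - q‖ < (p:ℝ) ^ (-1 / ((p:ℝ) - 1))) (k : ℕ) :
    ‖1 - q ^ (p^k)‖ = ((p:ℝ)⁻¹)^k * ‖1 - q‖ ∧
      ‖1 - q ^ (p^k)‖ < (p:ℝ) ^ (-1 / ((p:ℝ) - 1)) := by
  have hp1 : (1:ℝ) < (p:ℝ) := by exact_mod_cast hp.out.two_le
  induction k with
  | zero => simpa using hq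
  | succ k ih =>
    have hqe : q ^ (p^(k+1)) = (q ^ (p^k)) ^ p := by rw [pow_succ, pow_mul]
    have h1 := step_lemma hna hpK ih.2
    constructor
    · rw [hqe, h1, ih.1, pow_succ]; ring
    · rw [hqe, h1]
      calc (p:ℝ)⁻¹ * ‖1 - q^(p^k)‖ ≤ 1 * ‖1 - q^(p^k)‖ :=
            mul_le_mul_of_nonneg_right (by rw [← one_div]; apply div_le_one_of_le₀ <;> linarith)
              (norm_nonneg _)
        _ = ‖1 - q^(p^k)‖ := one_mul _
        _ < _ := ih.2

lemma qNum_norm (hpK : ‖(p : K)‖ = (p : ℝ)⁻¹) {q : K}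
    (hq : ‖1 - q‖ < (p:ℝ) ^ (-1 / ((p:ℝ) - 1))) (hq1 : q ≠ 1) (k : ℕ) :
    ‖qNum q (p^k)‖ = ((p:ℝ)⁻¹)^k := by
  have h1q : (1:K) - q ≠ 0 := sub_ne_zero.mpr (Ne.symm hq1)
  have h1qn : ‖(1:K) - q‖ ≠ 0 := norm_ne_zero_iff.mpr h1q
  rw [qNum, norm_div, (key_norm hna hpK hq k).1, mul_div_assoc, div_self h1qn, mul_one]

lemma delta_bound (hpK : ‖(p : K)‖ = (p : ℝ)⁻¹) {q : K}
    (hq : ‖1 - q‖ < (p:ℝ) ^ (-1 / ((p:ℝ) - 1))) (hq1 : q ≠ 1) (k : ℕ) :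
    ‖(p:K) * qNum q (p^k) - qNum q (p^(k+1))‖ ≤ (((p:ℝ)⁻¹)^k)^2 * ‖1 - q‖ := by
  have hp1 : (1:ℝ) < (p:ℝ) := by exact_mod_cast hp.out.two_le
  have hb1 : (p:ℝ) ^ (-1 / ((p:ℝ) - 1)) < 1 :=
    Real.rpow_lt_one_of_one_lt_of_neg hp1
      (div_neg_of_neg_of_pos (by norm_num) (by linarith))
  have h1q : (1:K) - q ≠ 0 := sub_ne_zero.mpr (Ne.symm hq1)
  have hqle : ‖q‖ ≤ 1 := by
    have h : ‖(1:K) + -(1 - q)‖ ≤ max ‖(1:K)‖ ‖-(1 - q)‖ := hna 1 (-(1 - q))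
    have he : (1:K) + -(1 - q) = q := by ring
    rw [he, norm_neg, norm_one] at h
    exact le_trans h (max_le le_rfl (le_trans hq.le hb1.le))
  set Q := q ^ (p^k) with hQ_def
  have hQle : ‖Q‖ ≤ 1 := by
    rw [hQ_def, norm_pow]; exact pow_le_one₀ (norm_nonneg q) hqle
  have hqe : q ^ (p^(k+1)) = Q ^ p := by rw [hQ_def, pow_succ, pow_mul]
  have hgeom : (1 - Q) * ∑ j ∈ range p, Q^j = 1 - Q^p := by
    have h := geom_sum_mul Q p
    linear_combination -h
  have hsum : ∑ j ∈ range p, ((1:K) - Q^j) = (p:K) - ∑ j ∈ range p, Q^j := by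
    rw [Finset.sum_sub_distrib, Finset.sum_const, Finset.card_range, nsmul_eq_mul, mul_one]
  have hfrac : (p:K) * qNum q (p^k) - qNum q (p^(k+1)) =
      ((1 - Q) * ∑ j ∈ range p, ((1:K) - Q^j)) / (1 - q) := by
    rw [qNum, qNum, hqe, hsum]
    rw [mul_div_assoc', ← sub_div]
    congr 1
    linear_combination hgeom
  have h1Q : ‖(1:K) - Q‖ = ((p:ℝ)⁻¹)^k * ‖1 - q‖ := by
    rw [hQ_def]; exact (key_norm hna hpK hq k).1
  have hq0 : 0 < ‖(1:K) - q‖ := norm_pos_iff.mpr h1q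
  have hSum : ‖∑ j ∈ range p, ((1:K) - Q^j)‖ ≤ ‖(1:K) - Q‖ :=
    nonarch_sum hna _ _ (norm_nonneg _) (fun j _ => one_sub_pow_le hna hQle j)
  rw [hfrac, norm_div, norm_mul]
  calc ‖(1:K) - Q‖ * ‖∑ j ∈ range p, ((1:K) - Q^j)‖ / ‖1 - q‖
      ≤ ‖(1:K) - Q‖ * ‖(1:K) - Q‖ / ‖1 - q‖ := by gcongr
    _ = (((p:ℝ)⁻¹)^k)^2 * ‖1 - q‖ := by rw [h1Q]; field_simp


end AuxLemmas

/-- for every C¹ function `f : ℤ_p → K`, the distribution `μ_{f,q}` is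
strongly p-adic q-invariant. -/
theorem mu_fq_strongly_invariant
(q : K) (hna : IsNonarchimedean (‖·‖ : K → ℝ)) (hpK : ‖(p : K)‖ = (p : ℝ)⁻¹)
    (hq : ‖1 - q‖ < (p : ℝ) ^ (-1 / ((p : ℝ) - 1))) (hq1 : q ≠ 1)
    (ι : PadicInt p →+* K) (hι : ∀ z, ‖ι z‖ = ‖z‖)
    (f : PadicInt p → K) (hf : IsC1 ι f)
    (μf : PadicInt p → ℕ → K)
    (hμf : ∀ (x : PadicInt p) (n : ℕ), Tendsto (fun m => (qNum q (p ^ (m + n)))⁻¹ *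
      ∑ i ∈ range (p ^ m), f (x + (p : PadicInt p) ^ n * (i : PadicInt p))) atTop (𝓝 (μf x n))) :
    ∃ C : ℝ, 0 < C ∧ ∀ (x : PadicInt p) (n : ℕ),
      ‖qNum q (p ^ n) * μf x n - qNum q (p ^ (n + 1)) * μf x (n + 1)‖ ≤
        C * (p : ℝ) ^ (-(n : ℤ)) := by
  classical
  obtain ⟨Df, hDfc, hDf⟩ := hf
  have hp2 : 2 ≤ p := hp.out.two_le
  have hpR : (1:ℝ) < (p:ℝ) := by exact_mod_cast hp2
  have hppos : (0:ℝ) < (p:ℝ) := by linarith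
  have ht0 : (0:ℝ) < (p:ℝ)⁻¹ := by positivity
  have ht1 : (p:ℝ)⁻¹ ≤ 1 := by
    rw [← one_div]; exact div_le_one_of_le₀ (by linarith) (by linarith)
  have htp : (p:ℝ)⁻¹ * (p:ℝ) = 1 := inv_mul_cancel₀ (ne_of_gt hppos)
  -- bound on Df
  obtain ⟨M₀, hM₀⟩ := (isCompact_univ (X := PadicInt p × PadicInt p)).exists_bound_of_continuousOn
    hDfc.continuousOn
  set M := max M₀ 0 with hM_def
  have hM0 : 0 ≤ M := le_max_right _ _
  have hDfM : ∀ z, ‖Df z‖ ≤ M := fun z => le_trans (hM₀ z trivial) (le_max_left _ _)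
  have hlip : ∀ y h : PadicInt p, ‖f (y + h) - f y‖ ≤ M * ‖h‖ := by
    intro y h
    by_cases h0 : h = 0
    · simp [h0]
    · rw [← hDf h y h0, norm_mul, hι]
      exact mul_le_mul_of_nonneg_right (hDfM _) (norm_nonneg _)
  set F := max ‖f 0‖ M with hF_def
  have hF0 : 0 ≤ F := le_trans hM0 (le_max_right _ _)
  have hFb : ∀ y, ‖f y‖ ≤ F := by
    intro y
    have h1 : ‖f (0 + y) - f 0‖ ≤ M * ‖y‖ := hlip 0 y
    rw [zero_add] at h1
    have h2 : ‖f 0 + (f y - f 0)‖ ≤ max ‖f 0‖ ‖f y - f 0‖ := hna _ _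
    have he : f 0 + (f y - f 0) = f y := by ring
    rw [he] at h2
    refine le_trans h2 (max_le (le_max_left _ _) (le_trans h1 (le_trans ?_ (le_max_right _ _))))
    calc M * ‖y‖ ≤ M * 1 := mul_le_mul_of_nonneg_left (PadicInt.norm_le_one y) hM0
      _ = M := mul_one M
  have hq0 : 0 < ‖1 - q‖ := norm_pos_iff.mpr (sub_ne_zero.mpr (Ne.symm hq1))
  set C0 := max M (‖1 - q‖ * F) with hC0_def
  have hC00 : 0 ≤ C0 := le_trans hM0 (le_max_left _ _)
  have hMC0 : M ≤ C0 := le_max_left _ _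
  have hqF : ‖1 - q‖ * F ≤ C0 := le_max_right _ _
  set C1 := max M (‖1 - q‖ * C0) with hC1_def
  have hC10 : 0 ≤ C1 := le_trans hM0 (le_max_left _ _)
  have hMC1 : M ≤ C1 := le_max_left _ _
  have hqC1 : ‖1 - q‖ * C0 ≤ C1 := le_max_right _ _
  have hC0m : C0 ≤ max C0 C1 := le_max_left _ _
  have hC1m : C1 ≤ max C0 C1 := le_max_right _ _
  have hmax0 : 0 ≤ max C0 C1 := le_trans hC00 hC0m
  refine ⟨(p:ℝ) * (max C0 C1 + 1), by positivity, ?_⟩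
  intro x n
  have hqN : ∀ k : ℕ, ‖qNum q (p^k)‖ = ((p:ℝ)⁻¹)^k := qNum_norm hna hpK hq hq1
  have hppow : ∀ k : ℕ, ‖((p:PadicInt p))^k‖ = ((p:ℝ)⁻¹)^k := by
    intro k; rw [PadicInt.norm_p_pow, zpow_neg, zpow_natCast, inv_pow]
  have hpc : ∀ (k : ℕ) (z : PadicInt p), ‖(p:PadicInt p)^k * z‖ ≤ ((p:ℝ)⁻¹)^k := by
    intro k z
    refine le_trans (norm_mul_le _ _) ?_
    rw [hppow]
    calc ((p:ℝ)⁻¹)^k * ‖z‖ ≤ ((p:ℝ)⁻¹)^k * 1 :=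
          mul_le_mul_of_nonneg_left (PadicInt.norm_le_one z) (by positivity)
      _ = ((p:ℝ)⁻¹)^k := mul_one _
  set u : PadicInt p → K := fun y =>
    qNum q (p^n) * (∑ r ∈ range p, f (y + (p:PadicInt p)^n * (r:PadicInt p)))
      - qNum q (p^(n+1)) * f y with hu_def
  -- pointwise bound on u
  have hu : ∀ y, ‖u y‖ ≤ C0 * (((p:ℝ)⁻¹)^n)^2 := by
    intro y
    have hsplit : u y = qNum q (p^n) *
        (∑ r ∈ range p, (f (y + (p:PadicInt p)^n * (r:PadicInt p)) - f y))
        + ((p:K) * qNum q (p^n) - qNum q (p^(n+1))) * f y := by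
      simp only [hu_def]
      rw [Finset.sum_sub_distrib, Finset.sum_const, Finset.card_range, nsmul_eq_mul]
      ring
    rw [hsplit]
    have hb1 : ‖qNum q (p^n) *
        (∑ r ∈ range p, (f (y + (p:PadicInt p)^n * (r:PadicInt p)) - f y))‖
        ≤ C0 * (((p:ℝ)⁻¹)^n)^2 := by
      rw [norm_mul, hqN n]
      have hin : ‖∑ r ∈ range p, (f (y + (p:PadicInt p)^n * (r:PadicInt p)) - f y)‖
          ≤ M * ((p:ℝ)⁻¹)^n := by
        refine nonarch_sum hna _ _ (by positivity) (fun r _ => ?_)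
        exact le_trans (hlip y _) (mul_le_mul_of_nonneg_left (hpc n _) hM0)
      refine le_trans (mul_le_mul_of_nonneg_left hin (by positivity)) ?_
      have he : ((p:ℝ)⁻¹)^n * (M * ((p:ℝ)⁻¹)^n) = M * (((p:ℝ)⁻¹)^n)^2 := by ring
      rw [he]
      exact mul_le_mul_of_nonneg_right hMC0 (by positivity)
    have hb2 : ‖((p:K) * qNum q (p^n) - qNum q (p^(n+1))) * f y‖ ≤ C0 * (((p:ℝ)⁻¹)^n)^2 := by
      rw [norm_mul]
      calc ‖(p:K) * qNum q (p^n) - qNum q (p^(n+1))‖ * ‖f y‖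
          ≤ ((((p:ℝ)⁻¹)^n)^2 * ‖1 - q‖) * F :=
            mul_le_mul (delta_bound hna hpK hq hq1 n) (hFb y) (norm_nonneg _) (by positivity)
        _ = (‖1 - q‖ * F) * (((p:ℝ)⁻¹)^n)^2 := by ring
        _ ≤ C0 * (((p:ℝ)⁻¹)^n)^2 := mul_le_mul_of_nonneg_right hqF (by positivity)
    exact le_trans (hna _ _) (max_le hb1 hb2)
  -- Lipschitz style bound on u
  have hulip : ∀ y h : PadicInt p, ‖u (y + h) - u y‖ ≤ M * ((p:ℝ)⁻¹)^n * ‖h‖ := by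
    intro y h
    have hsplit : u (y + h) - u y = qNum q (p^n) *
        (∑ r ∈ range p, (f (y + h + (p:PadicInt p)^n * (r:PadicInt p))
          - f (y + (p:PadicInt p)^n * (r:PadicInt p))))
        + (-(qNum q (p^(n+1)))) * (f (y + h) - f y) := by
      simp only [hu_def]
      rw [Finset.sum_sub_distrib]
      ring
    rw [hsplit]
    refine le_trans (hna _ _) (max_le ?_ ?_)
    · show ‖qNum q (p^n) * _‖ ≤ _
      rw [norm_mul, hqN n]
      have hin : ‖∑ r ∈ range p, (f (y + h + (p:PadicInt p)^n * (r:PadicInt p))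
          - f (y + (p:PadicInt p)^n * (r:PadicInt p)))‖ ≤ M * ‖h‖ := by
        refine nonarch_sum hna _ _ (mul_nonneg hM0 (norm_nonneg _)) (fun r _ => ?_)
        have ha : y + h + (p:PadicInt p)^n * (r:PadicInt p)
            = (y + (p:PadicInt p)^n * (r:PadicInt p)) + h := by ring
        rw [ha]
        exact hlip _ _
      refine le_trans (mul_le_mul_of_nonneg_left hin (by positivity)) ?_
      have he : ((p:ℝ)⁻¹)^n * (M * ‖h‖) = M * ((p:ℝ)⁻¹)^n * ‖h‖ := by ring
      rw [he]
    · show ‖(-(qNum q (p^(n+1)))) * (f (y + h) - f y)‖ ≤ _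
      rw [norm_mul, norm_neg, hqN (n+1)]
      calc ((p:ℝ)⁻¹)^(n+1) * ‖f (y + h) - f y‖
          ≤ ((p:ℝ)⁻¹)^n * ‖f (y + h) - f y‖ := by
            refine mul_le_mul_of_nonneg_right ?_ (norm_nonneg _)
            exact pow_le_pow_of_le_one ht0.le ht1 (by omega)
        _ ≤ ((p:ℝ)⁻¹)^n * (M * ‖h‖) :=
            mul_le_mul_of_nonneg_left (hlip y h) (by positivity)
        _ = M * ((p:ℝ)⁻¹)^n * ‖h‖ := by ring
  set T : ℕ → K := fun m =>
    ∑ i ∈ range (p^m), u (x + (p:PadicInt p)^(n+1) * (i:PadicInt p)) with hT_def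
  -- identity I
  have hTS : ∀ m : ℕ,
      qNum q (p^n) * (∑ i ∈ range (p^(m+1)), f (x + (p:PadicInt p)^n * (i:PadicInt p)))
      - qNum q (p^(n+1)) * (∑ i ∈ range (p^m), f (x + (p:PadicInt p)^(n+1) * (i:PadicInt p)))
      = T m := by
    intro m
    have hre : ∑ i ∈ range (p^(m+1)), f (x + (p:PadicInt p)^n * (i:PadicInt p))
        = ∑ i ∈ range (p^m), ∑ r ∈ range p,
            f ((x + (p:PadicInt p)^(n+1) * (i:PadicInt p)) + (p:PadicInt p)^n * (r:PadicInt p)) := by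
      rw [show p^(m+1) = p * p^m by rw [pow_succ, Nat.mul_comm], sum_range_mul']
      refine Finset.sum_congr rfl fun i _ => Finset.sum_congr rfl fun r _ => ?_
      congr 1
      push_cast
      ring
    rw [hre, Finset.mul_sum, Finset.mul_sum, ← Finset.sum_sub_distrib]
  -- identity II
  have hTsucc : ∀ m : ℕ, T (m+1) = ∑ i ∈ range (p^m), ∑ r ∈ range p,
      u ((x + (p:PadicInt p)^(n+1) * (i:PadicInt p)) + (p:PadicInt p)^(m+n+1) * (r:PadicInt p)) := by
    intro m
    simp only [hT_def]
    rw [show p^(m+1) = p^m * p from pow_succ p m, sum_range_mul', Finset.sum_comm]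
    refine Finset.sum_congr rfl fun i _ => Finset.sum_congr rfl fun r _ => ?_
    congr 1
    push_cast
    ring
  -- direct bound on T
  have hT1 : ∀ m : ℕ, ‖T m‖ ≤ C0 * (((p:ℝ)⁻¹)^n)^2 := by
    intro m
    simp only [hT_def]
    exact nonarch_sum hna _ _ (by positivity) (fun i _ => hu _)
  -- difference bound
  have hE1 : ∀ m : ℕ, ‖T (m+1) - (p:K) * T m‖
      ≤ M * ((p:ℝ)⁻¹)^n * ((p:ℝ)⁻¹)^(m+n+1) := by
    intro m
    have hpT : (p:K) * T m = ∑ i ∈ range (p^m), ∑ r ∈ range p,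
        u (x + (p:PadicInt p)^(n+1) * (i:PadicInt p)) := by
      simp only [hT_def]
      rw [Finset.mul_sum]
      refine Finset.sum_congr rfl fun i _ => ?_
      rw [Finset.sum_const, Finset.card_range, nsmul_eq_mul]
    rw [hTsucc m, hpT, ← Finset.sum_sub_distrib]
    refine nonarch_sum hna _ _ (mul_nonneg (mul_nonneg hM0 (by positivity)) (by positivity))
      (fun i _ => ?_)
    rw [← Finset.sum_sub_distrib]
    refine nonarch_sum hna _ _ (mul_nonneg (mul_nonneg hM0 (by positivity)) (by positivity))
      (fun r _ => ?_)
    refine le_trans (hulip _ _) ?_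
    exact mul_le_mul_of_nonneg_left (hpc (m+n+1) _) (mul_nonneg hM0 (by positivity))
  -- main inductive bound on T
  have hTm : ∀ m : ℕ, ‖T m‖ ≤ ((p:ℝ)⁻¹)^(m+n+1) * ((p:ℝ) * max C0 C1 * ((p:ℝ)⁻¹)^n) := by
    intro m
    induction m with
    | zero =>
      refine le_trans (hT1 0) ?_
      have he : ((p:ℝ)⁻¹)^(0+n+1) * ((p:ℝ) * max C0 C1 * ((p:ℝ)⁻¹)^n)
          = max C0 C1 * (((p:ℝ)⁻¹)^n)^2 := by
        have h := htp
        have he2 : (0:ℕ)+n+1 = n+1 := by omega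
        rw [he2, pow_succ]
        linear_combination (((p:ℝ)⁻¹)^n * ((p:ℝ)⁻¹)^n * max C0 C1) * htp
      rw [he]
      exact mul_le_mul_of_nonneg_right hC0m (by positivity)
    | succ m ih =>
      have hE2 := delta_bound hna hpK hq hq1 (m+n+1)
      have hbpos : 0 < ‖qNum q (p^(m+n+1))‖ := by rw [hqN]; positivity
      have hexp : m+1+n+1 = m+n+1+1 := by omega
      rw [hexp]
      have key : ‖qNum q (p^(m+n+1))‖ * ‖T (m+1)‖
          ≤ ‖qNum q (p^(m+n+1))‖ *
            (((p:ℝ)⁻¹)^(m+n+1+1) * ((p:ℝ) * max C0 C1 * ((p:ℝ)⁻¹)^n)) := by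
        have hsplit : qNum q (p^(m+n+1)) * T (m+1) =
            (qNum q (p^(m+n+1)) * (T (m+1) - (p:K) * T m)
              + ((p:K) * qNum q (p^(m+n+1)) - qNum q (p^(m+n+1+1))) * T m)
              + qNum q (p^(m+n+1+1)) * T m := by ring
        rw [← norm_mul, hsplit]
        refine le_trans (hna _ _) (max_le (le_trans (hna _ _) (max_le ?_ ?_)) ?_)
        · -- first piece
          beta_reduce
          rw [norm_mul, hqN]
          refine le_trans (mul_le_mul_of_nonneg_left (hE1 m) (by positivity)) ?_
          have hiden : ((p:ℝ)⁻¹)^(m+n+1) *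
              (((p:ℝ)⁻¹)^(m+n+1+1) * ((p:ℝ) * max C0 C1 * ((p:ℝ)⁻¹)^n))
              = ((p:ℝ)⁻¹)^(m+n+1) * (max C0 C1 * ((p:ℝ)⁻¹)^n * ((p:ℝ)⁻¹)^(m+n+1)) := by
            rw [pow_succ ((p:ℝ)⁻¹) (m+n+1)]
            linear_combination (((p:ℝ)⁻¹)^(m+n+1) * ((p:ℝ)⁻¹)^(m+n+1) * ((p:ℝ)⁻¹)^n
              * max C0 C1) * htp
          rw [hiden]
          refine mul_le_mul_of_nonneg_left ?_ (by positivity)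
          refine mul_le_mul_of_nonneg_right ?_ (by positivity)
          exact mul_le_mul_of_nonneg_right (le_trans hMC1 hC1m) (by positivity)
        · -- second piece
          beta_reduce
          rw [norm_mul]
          refine le_trans (mul_le_mul hE2 (hT1 m) (norm_nonneg (T m)) (by positivity)) ?_
          have hiden : ((p:ℝ)⁻¹)^(m+n+1) *
              (((p:ℝ)⁻¹)^(m+n+1+1) * ((p:ℝ) * max C0 C1 * ((p:ℝ)⁻¹)^n))
              = (((p:ℝ)⁻¹)^(m+n+1))^2 * (max C0 C1 * ((p:ℝ)⁻¹)^n) := by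
            rw [pow_succ ((p:ℝ)⁻¹) (m+n+1)]
            linear_combination (((p:ℝ)⁻¹)^(m+n+1) * ((p:ℝ)⁻¹)^(m+n+1) * ((p:ℝ)⁻¹)^n
              * max C0 C1) * htp
          rw [hqN, hiden]
          have hassoc : (((p:ℝ)⁻¹)^(m+n+1))^2 * ‖1 - q‖ * (C0 * (((p:ℝ)⁻¹)^n)^2)
              = (((p:ℝ)⁻¹)^(m+n+1))^2 * (‖1 - q‖ * (C0 * (((p:ℝ)⁻¹)^n)^2)) := by ring
          rw [hassoc]
          refine mul_le_mul_of_nonneg_left ?_ (by positivity)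
          calc ‖1 - q‖ * (C0 * (((p:ℝ)⁻¹)^n)^2)
              = (‖1 - q‖ * C0 * ((p:ℝ)⁻¹)^n) * ((p:ℝ)⁻¹)^n := by ring
            _ ≤ (C1 * 1) * ((p:ℝ)⁻¹)^n := by
                refine mul_le_mul_of_nonneg_right ?_ (by positivity)
                exact mul_le_mul hqC1 (pow_le_one₀ ht0.le ht1) (by positivity) hC10
            _ = C1 * ((p:ℝ)⁻¹)^n := by ring
            _ ≤ max C0 C1 * ((p:ℝ)⁻¹)^n := mul_le_mul_of_nonneg_right hC1m (by positivity)
        · -- third piece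
          beta_reduce
          rw [norm_mul, hqN, hqN]
          refine le_trans (mul_le_mul_of_nonneg_left ih (by positivity)) ?_
          have hiden : ((p:ℝ)⁻¹)^(m+n+1+1) *
              (((p:ℝ)⁻¹)^(m+n+1) * ((p:ℝ) * max C0 C1 * ((p:ℝ)⁻¹)^n))
              = ((p:ℝ)⁻¹)^(m+n+1) *
              (((p:ℝ)⁻¹)^(m+n+1+1) * ((p:ℝ) * max C0 C1 * ((p:ℝ)⁻¹)^n)) := by ring
          rw [hiden]
      exact le_of_mul_le_mul_left key hbpos
  -- convergence
  have hA : Tendsto (fun m : ℕ =>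
      qNum q (p ^ n) * ((qNum q (p ^ (m + 1 + n)))⁻¹ *
        ∑ i ∈ range (p ^ (m+1)), f (x + (p:PadicInt p) ^ n * (i:PadicInt p)))
      - qNum q (p ^ (n+1)) * ((qNum q (p ^ (m + (n+1))))⁻¹ *
        ∑ i ∈ range (p ^ m), f (x + (p:PadicInt p) ^ (n+1) * (i:PadicInt p))))
      atTop (𝓝 (qNum q (p ^ n) * μf x n - qNum q (p ^ (n + 1)) * μf x (n + 1))) := by
    refine Tendsto.sub ?_ ?_
    · exact (((hμf x n).comp (tendsto_add_atTop_nat 1)).const_mul _)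
    · exact ((hμf x (n+1)).const_mul _)
  have hAB : ∀ m : ℕ,
      ‖qNum q (p ^ n) * ((qNum q (p ^ (m + 1 + n)))⁻¹ *
        ∑ i ∈ range (p ^ (m+1)), f (x + (p:PadicInt p) ^ n * (i:PadicInt p)))
      - qNum q (p ^ (n+1)) * ((qNum q (p ^ (m + (n+1))))⁻¹ *
        ∑ i ∈ range (p ^ m), f (x + (p:PadicInt p) ^ (n+1) * (i:PadicInt p)))‖
      ≤ (p:ℝ) * max C0 C1 * ((p:ℝ)⁻¹)^n := by
    intro m
    have he1 : m + 1 + n = m + n + 1 := by omega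
    have he2 : m + (n+1) = m + n + 1 := by omega
    rw [he1, he2]
    have hAT : qNum q (p ^ n) * ((qNum q (p ^ (m + n + 1)))⁻¹ *
        ∑ i ∈ range (p ^ (m+1)), f (x + (p:PadicInt p) ^ n * (i:PadicInt p)))
        - qNum q (p ^ (n+1)) * ((qNum q (p ^ (m + n + 1)))⁻¹ *
        ∑ i ∈ range (p ^ m), f (x + (p:PadicInt p) ^ (n+1) * (i:PadicInt p)))
        = (qNum q (p ^ (m+n+1)))⁻¹ * T m := by
      rw [← hTS m]
      ring
    rw [hAT, norm_mul, norm_inv, hqN]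
    have hne : (((p:ℝ)⁻¹)^(m+n+1)) ≠ 0 := by positivity
    refine le_trans (mul_le_mul_of_nonneg_left (hTm m) (by positivity)) ?_
    rw [inv_mul_cancel_left₀ hne]
  have hL := le_of_tendsto hA.norm (Eventually.of_forall hAB)
  refine le_trans hL ?_
  have hzp : (p:ℝ) ^ (-(n:ℤ)) = ((p:ℝ)⁻¹)^n := by
    rw [zpow_neg, zpow_natCast, inv_pow]
  rw [hzp]
  have ha0 : (0:ℝ) ≤ ((p:ℝ)⁻¹)^n := by positivity
  nlinarith [mul_nonneg hppos.le ha0]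
end
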